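/- arXiv:math/9804074 — 3 statements merged into one kernel-verified Lean document; each statement's English description precedes it below -/
import Mathlib

section
/- Let A be a unital C*-algebra and E a conditional expectation on A. If there exists a real number K with 1 ≤ K < 2 such that K·E − id_A is positive, then E = id_A. Consequently, the infimum of all K ≥ 1 for which K·E − id_A is positive lies in {1} ∪ [2, ∞). -/
variable {A : Type*} [CStarAlgebra A] [PartialOrder A] [StarOrderedRing A]

/-- A conditional expectation on a unital C*-algebra `A`: a linear, idempotent, unital,
positive, contractive (norm-one, since `E 1 = 1`) map whose range is a C*-subalgebra
`B = E(A)` (closed under multiplication and star) and which is a `B`-bimodule map. -/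
structure IsCondExp (E : A → A) : Prop where
  map_add : ∀ a b : A, E (a + b) = E a + E b
  map_smul : ∀ (c : ℂ) (a : A), E (c • a) = c • E a
  idem : ∀ a : A, E (E a) = E a
  map_one : E 1 = 1
  pos : ∀ a : A, 0 ≤ a → 0 ≤ E a
  contractive : ∀ a : A, ‖E a‖ ≤ ‖a‖
  range_mul : ∀ a b : A, E (E a * E b) = E a * E b
  range_star : ∀ a : A, E (star (E a)) = star (E a)
  bimod : ∀ a b c : A, E (E b * a * E c) = E b * E a * E c

namespace IsCondExp

variable {E : A → A}

lemma map_neg' (hE : IsCondExp E) (a : A) : E (-a) = -E a := by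
  have := hE.map_smul (-1 : ℂ) a
  simpa using this

lemma map_sub' (hE : IsCondExp E) (a b : A) : E (a - b) = E a - E b := by
  rw [sub_eq_add_neg, hE.map_add, hE.map_neg', ← sub_eq_add_neg]

lemma map_real_smul (hE : IsCondExp E) (r : ℝ) (a : A) : E (r • a) = r • E a := by
  rw [← Complex.coe_smul, hE.map_smul, Complex.coe_smul]

lemma selfAdjoint_map (hE : IsCondExp E) {a : A} (ha : IsSelfAdjoint a) : IsSelfAdjoint (E a) := by
  have hdecomp : E a = E (a⁺) - E (a⁻) := by
    rw [← hE.map_sub', CFC.posPart_sub_negPart a ha]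
  rw [hdecomp]
  exact (IsSelfAdjoint.of_nonneg (hE.pos _ (CFC.posPart_nonneg a))).sub
    (IsSelfAdjoint.of_nonneg (hE.pos _ (CFC.negPart_nonneg a)))

/-- The key estimate: if `K • E - id` is positive with `K < 2`, and `x` is self-adjoint
with `E x = 0` and `‖x‖` in the spectrum of `x`, then `x = 0`. -/
lemma key (hE : IsCondExp E) {K : ℝ} (hK1 : 1 ≤ K) (hK2 : K < 2)
    (hpos : ∀ a : A, 0 ≤ a → 0 ≤ K • E a - a)
    (x : A) (hx : IsSelfAdjoint x) (hEx : E x = 0)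
    (hs : ‖x‖ ∈ spectrum ℝ x) : ‖x‖ ≤ 0 := by
  by_contra h
  push_neg at h
  have hxne : x ≠ 0 := fun hx0 => by simp [hx0] at h
  have : Nontrivial A := nontrivial_of_ne x 0 hxne
  set n : ℝ := ‖x‖ with hn
  set b : A := x + n • (1 : A) with hb_def
  have hone : IsSelfAdjoint (n • (1 : A)) := by
    rw [← Algebra.algebraMap_eq_smul_one]
    exact IsSelfAdjoint.algebraMap A (IsSelfAdjoint.all n)
  have hb : IsSelfAdjoint b := hx.add hone
  -- `2n` lies in the spectrum of `b`
  have hspec : (2 * n : ℝ) ∈ spectrum ℝ b := by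
    have : n + n ∈ spectrum ℝ (x + algebraMap ℝ A n) := by
      rw [spectrum.add_mem_iff]
      simpa using hs
    rw [Algebra.algebraMap_eq_smul_one] at this
    rw [two_mul]
    exact this
  have hnormb : 2 * n ≤ ‖b‖ := by
    have := spectrum.norm_le_norm_of_mem hspec
    rw [Real.norm_eq_abs] at this
    exact (le_abs_self _).trans this
  -- expand `b * b`
  have hbb : b * b = x * x + (2 * n) • x + (n * n) • (1 : A) := by
    rw [hb_def]
    simp only [mul_add, add_mul, smul_mul_assoc, mul_smul_comm, one_mul, mul_one, smul_smul]
    module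
  have hEbb : E (b * b) = E (x * x) + (n * n) • (1 : A) := by
    rw [hbb, hE.map_add, hE.map_add, hE.map_real_smul, hE.map_real_smul, hEx, smul_zero,
      add_zero, hE.map_one]
  -- positivity
  have hbbpos : (0 : A) ≤ b * b := by
    have := star_mul_self_nonneg b
    rwa [hb.star_eq] at this
  have hle : b * b ≤ K • E (b * b) := sub_nonneg.mp (hpos (b * b) hbbpos)
  -- norms
  have hnorm1 : ‖b * b‖ ≤ ‖K • E (b * b)‖ :=
    CStarAlgebra.norm_le_norm_of_nonneg_of_le hbbpos hle
  have hbbnorm : ‖b * b‖ = ‖b‖ ^ 2 := by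
    nth_rewrite 1 [← hb.star_eq]
    rw [CStarRing.norm_star_mul_self, sq]
  have hExx : ‖E (x * x)‖ ≤ n * n := by
    calc ‖E (x * x)‖ ≤ ‖x * x‖ := hE.contractive _
      _ = n * n := by nth_rewrite 1 [← hx.star_eq]; rw [CStarRing.norm_star_mul_self]
  have hrhs : ‖K • E (b * b)‖ ≤ K * (2 * (n * n)) := by
    rw [hEbb, norm_smul, Real.norm_eq_abs, abs_of_nonneg (by linarith)]
    have h1 : ‖E (x * x) + (n * n) • (1 : A)‖ ≤ ‖E (x * x)‖ + ‖(n * n) • (1 : A)‖ :=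
      norm_add_le _ _
    have h2 : ‖(n * n) • (1 : A)‖ = n * n := by
      rw [norm_smul, Real.norm_eq_abs, CStarRing.norm_one, mul_one,
        abs_of_nonneg (mul_self_nonneg n)]
    have hK0 : (0 : ℝ) ≤ K := by linarith
    calc K * ‖E (x * x) + (n * n) • (1 : A)‖
        ≤ K * (‖E (x * x)‖ + ‖(n * n) • (1 : A)‖) := mul_le_mul_of_nonneg_left h1 hK0
      _ = K * (‖E (x * x)‖ + n * n) := by rw [h2]
      _ ≤ K * (2 * (n * n)) := by nlinarith
  have hlhs : (2 * n) ^ 2 ≤ ‖b * b‖ := by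
    rw [hbbnorm]
    have hb0 : (0 : ℝ) ≤ 2 * n := by linarith
    exact pow_le_pow_left₀ hb0 hnormb 2
  -- conclude
  have : (2 * n) ^ 2 ≤ K * (2 * (n * n)) := hlhs.trans (hnorm1.trans hrhs)
  nlinarith [mul_pos h h]

/-- If `K • E - id` is positive for some `1 ≤ K < 2`, then `E` fixes self-adjoint elements. -/
lemma fix_selfAdjoint (hE : IsCondExp E) {K : ℝ} (hK1 : 1 ≤ K) (hK2 : K < 2)
    (hpos : ∀ a : A, 0 ≤ a → 0 ≤ K • E a - a)
    {y : A} (hy : IsSelfAdjoint y) : E y = y := by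
  set x : A := y - E y with hx_def
  have hEx : E x = 0 := by rw [hx_def, hE.map_sub', hE.idem, sub_self]
  have hx : IsSelfAdjoint x := hy.sub (hE.selfAdjoint_map hy)
  have hxnorm : ‖x‖ = 0 := by
    rcases subsingleton_or_nontrivial A with hsub | hnt
    · rw [Subsingleton.elim x 0, norm_zero]
    rcases CStarAlgebra.norm_or_neg_norm_mem_spectrum hx with hs | hs
    · exact le_antisymm (hE.key hK1 hK2 hpos x hx hEx hs) (norm_nonneg x)
    · have hs' : ‖-x‖ ∈ spectrum ℝ (-x) := by
        rw [norm_neg, ← spectrum.neg_eq, Set.mem_neg]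
        exact hs
      have hEnx : E (-x) = 0 := by rw [hE.map_neg', hEx, neg_zero]
      have := hE.key hK1 hK2 hpos (-x) hx.neg hEnx hs'
      rw [norm_neg] at this
      exact le_antisymm this (norm_nonneg x)
  have h0 : y - E y = 0 := by rw [← hx_def]; exact norm_eq_zero.mp hxnorm
  exact (sub_eq_zero.mp h0).symm

end IsCondExp

theorem condexp_index_constant_gap
    (E : A → A) (hE : IsCondExp E) :
    ((∃ K : ℝ, 1 ≤ K ∧ K < 2 ∧ ∀ a : A, 0 ≤ a → 0 ≤ K • E a - a) →
      ∀ a : A, E a = a) ∧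
    ((∃ K : ℝ, 1 ≤ K ∧ ∀ a : A, 0 ≤ a → 0 ≤ K • E a - a) →
      sInf {K : ℝ | 1 ≤ K ∧ ∀ a : A, 0 ≤ a → 0 ≤ K • E a - a} ∈
        ({1} : Set ℝ) ∪ Set.Ici (2 : ℝ)) := by
  have main : (∃ K : ℝ, 1 ≤ K ∧ K < 2 ∧ ∀ a : A, 0 ≤ a → 0 ≤ K • E a - a) →
      ∀ a : A, E a = a := by
    rintro ⟨K, hK1, hK2, hpos⟩ a
    have hre : E ((realPart a : A)) = (realPart a : A) :=
      hE.fix_selfAdjoint hK1 hK2 hpos (realPart a).2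
    have him : E ((imaginaryPart a : A)) = (imaginaryPart a : A) :=
      hE.fix_selfAdjoint hK1 hK2 hpos (imaginaryPart a).2
    conv_rhs => rw [← realPart_add_I_smul_imaginaryPart a]
    conv_lhs => rw [← realPart_add_I_smul_imaginaryPart a]
    rw [hE.map_add, hE.map_smul, hre, him]
  refine ⟨main, ?_⟩
  rintro ⟨K, hK1, hpos⟩
  set S := {K : ℝ | 1 ≤ K ∧ ∀ a : A, 0 ≤ a → 0 ≤ K • E a - a} with hS
  have hne : S.Nonempty := ⟨K, hK1, hpos⟩
  have hbd : BddBelow S := ⟨1, fun k hk => hk.1⟩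
  by_cases h2 : 2 ≤ sInf S
  · exact Or.inr h2
  · left
    push_neg at h2
    obtain ⟨K', hK'S, hK'2⟩ := exists_lt_of_csInf_lt hne h2
    have hid := main ⟨K', hK'S.1, hK'2, hK'S.2⟩
    have h1S : (1 : ℝ) ∈ S := by
      refine ⟨le_refl 1, fun a ha => ?_⟩
      rw [hid a, one_smul, sub_self]
    have hle1 : sInf S ≤ 1 := csInf_le hbd h1S
    have hge1 : (1 : ℝ) ≤ sInf S := le_csInf hne fun k hk => hk.1
    exact Set.mem_singleton_iff.mpr (le_antisymm hle1 hge1)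
end

section
/- Let M be a commutative unital C*-algebra, E a faithful conditional expectation on M whose range N = E(M) is finite-dimensional over ℂ, and K ≥ 1 a real number such that K·E − id_M is positive. Then M is finite-dimensional over ℂ and dim_ℂ M ≤ ⌊K⌋ · dim_ℂ N, where ⌊K⌋ denotes the integer part of K. -/
variable {A : Type*} [CStarAlgebra A] [PartialOrder A] [StarOrderedRing A]

/-!
By Gelfand duality `M ≅ C(X)`, where `X` is the character space of `M`, so `dim M = |X|`.
Restriction to the range `N` of `E` maps `X` to the algebra homomorphisms `N → ℂ`, of which
there are at most `dim N` (Dedekind). If `φ₁, …, φₙ` have the same restriction, Urysohn functions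
with disjoint supports give `aᵢ ≥ 0` with `φᵢ(aᵢ) = 1` and `∑ aᵢ ≤ 1`. Positivity of `K E - id`
at `aᵢ` gives `1 ≤ K φ₁(E aᵢ)`, and positivity of `E` at `1 - ∑ aᵢ` gives `∑ φ₁(E aᵢ) ≤ 1`;
hence `n ≤ K`, and `|X| ≤ ⌊K⌋ dim N`.
-/

open WeakDual Module Finset
open scoped ComplexOrder

theorem Finset.exists_continuous_nonneg_sum_le_one_apply_self_eq_one {X : Type*}
    [TopologicalSpace X] [T35Space X] (t : Finset X) :
    ∃ f : X → C(X, ℝ), (∀ x, 0 ≤ f x) ∧ ∑ x ∈ t, f x ≤ 1 ∧ ∀ x, f x x = 1 := by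
  obtain ⟨U, hU, hUdisj⟩ := t.finite_toSet.t2_separation
  have bump (x : X) : ∃ g : C(X, ℝ), 0 ≤ g ∧ g ≤ 1 ∧ g x = 1 ∧ ∀ y ∉ U x, g y = 0 := by
    obtain ⟨g, hg, hgx, hgU⟩ :=
      CompletelyRegularSpace.completely_regular_isOpen x (U x) (hU x).2 (hU x).1
    refine ⟨⟨fun y => unitInterval.symm (g y), by fun_prop⟩, fun y => (unitInterval.symm (g y)).2.1,
      fun y => (unitInterval.symm (g y)).2.2, by simp [hgx], fun y hy => by simp [hgU hy]⟩
  choose f hf0 hfle hfx hfU using bump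
  refine ⟨f, hf0, fun y => ?_, hfx⟩
  by_cases hy : ∃ x ∈ t, y ∈ U x
  · obtain ⟨x, hx, hyx⟩ := hy
    have hzero : ∀ x' ∈ t, x' ≠ x → f x' y = 0 := fun x' hx' hne =>
      hfU x' y fun hyx' => Set.disjoint_left.mp (hUdisj hx' hx hne) hyx' hyx
    simpa [ContinuousMap.sum_apply, Finset.sum_eq_single_of_mem x hx hzero] using hfle x y
  · push Not at hy
    simp [ContinuousMap.sum_apply, Finset.sum_eq_zero fun x hx => hfU x y (hy x hx)]

theorem finite_and_natCard_le_of_forall_card_le {α : Type*} {n : ℕ}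
    (h : ∀ s : Finset α, #s ≤ n) : Finite α ∧ Nat.card α ≤ n := by
  have : Finite α := by
    by_contra hinf
    have : Infinite α := not_finite_iff_infinite.mp hinf
    obtain ⟨s, hs⟩ := Infinite.exists_subset_card_eq α (n + 1)
    exact absurd (h s) (by omega)
  have := Fintype.ofFinite α
  exact ⟨inferInstance, by simpa [Nat.card_eq_fintype_card] using h univ⟩

theorem WeakDual.CharacterSpace.apply_nonneg (φ : characterSpace ℂ A) {a : A} (ha : 0 ≤ a) :
    0 ≤ φ a :=
  spectrum_nonneg_of_nonneg ha (CharacterSpace.apply_mem_spectrum φ a)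

namespace IsCondExp

variable {A : Type*} [CStarAlgebra A] [PartialOrder A] {E : A → A}

noncomputable def toLinearMap (hE : IsCondExp E) : A →ₗ[ℂ] A where
  toFun := E
  map_add' := hE.map_add
  map_smul' := hE.map_smul

theorem toLinearMap_apply (hE : IsCondExp E) (a : A) : hE.toLinearMap a = E a := rfl

noncomputable def rangeSubalgebra (hE : IsCondExp E) : Subalgebra ℂ A :=
  (LinearMap.range hE.toLinearMap).toSubalgebra ⟨1, hE.map_one⟩
    (by rintro _ _ ⟨a, rfl⟩ ⟨b, rfl⟩; exact ⟨_, hE.range_mul a b⟩)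

theorem apply_mem_rangeSubalgebra (hE : IsCondExp E) (a : A) : E a ∈ hE.rangeSubalgebra :=
  ⟨a, rfl⟩

theorem toSubmodule_rangeSubalgebra (hE : IsCondExp E) :
    Subalgebra.toSubmodule hE.rangeSubalgebra = Submodule.span ℂ (Set.range E) :=
  (Submodule.span_eq _).symm

variable [StarOrderedRing A]

theorem card_le_of_sum_le_one (hE : IsCondExp E) {K : ℝ} (hK : 0 ≤ K)
    (hpos : ∀ a : A, 0 ≤ a → 0 ≤ K • E a - a) (φ₀ : characterSpace ℂ A)
    (t : Finset (characterSpace ℂ A)) (ht : ∀ φ ∈ t, ∀ a, φ (E a) = φ₀ (E a))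
    (a : characterSpace ℂ A → A) (ha : ∀ φ, 0 ≤ a φ) (hsum : ∑ φ ∈ t, a φ ≤ 1)
    (hone : ∀ φ ∈ t, φ (a φ) = 1) : (#t : ℝ) ≤ K := by
  have hlower : ∀ φ ∈ t, 1 ≤ (K : ℂ) * φ₀ (E (a φ)) := fun φ hφ => by
    have := CharacterSpace.apply_nonneg φ (hpos _ (ha φ))
    rwa [map_sub, ← Complex.coe_smul, _root_.map_smul φ, smul_eq_mul, ht φ hφ, hone φ hφ,
      sub_nonneg] at this
  have hupper : ∑ φ ∈ t, φ₀ (E (a φ)) ≤ 1 := by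
    have := CharacterSpace.apply_nonneg φ₀ (hE.pos _ (sub_nonneg.mpr hsum))
    rwa [← hE.toLinearMap_apply, map_sub, map_sum, hE.toLinearMap_apply, hE.map_one, map_sub,
      _root_.map_one φ₀, map_sum, sub_nonneg] at this
  have : (#t : ℂ) ≤ K := calc
    (#t : ℂ) = ∑ φ ∈ t, 1 := by simp
    _ ≤ ∑ φ ∈ t, (K : ℂ) * φ₀ (E (a φ)) := sum_le_sum hlower
    _ = K * ∑ φ ∈ t, φ₀ (E (a φ)) := (mul_sum _ _ _).symm
    _ ≤ K * 1 := mul_le_mul_of_nonneg_left hupper (by exact_mod_cast hK)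
    _ = K := mul_one _
  exact_mod_cast this

end IsCondExp

section Commutative

variable {M : Type*} [CommCStarAlgebra M]

noncomputable def linearEquivFunOfFiniteCharacterSpace [Finite (characterSpace ℂ M)] :
    M ≃ₗ[ℂ] (characterSpace ℂ M → ℂ) :=
  (gelfandStarTransform M).toAlgEquiv.toLinearEquiv ≪≫ₗ
    LinearEquiv.ofBijective (ContinuousMap.coeFnLinearMap ℂ)
      ⟨DFunLike.coe_injective, fun f => ⟨⟨f, continuous_of_discreteTopology⟩, rfl⟩⟩

theorem finiteDimensional_of_finite_characterSpace [Finite (characterSpace ℂ M)] :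
    FiniteDimensional ℂ M :=
  Module.Finite.equiv linearEquivFunOfFiniteCharacterSpace.symm

theorem finrank_eq_natCard_characterSpace [Finite (characterSpace ℂ M)] :
    finrank ℂ M = Nat.card (characterSpace ℂ M) := by
  have := Fintype.ofFinite (characterSpace ℂ M)
  rw [linearEquivFunOfFiniteCharacterSpace.finrank_eq, finrank_fintype_fun_eq_card,
    Nat.card_eq_fintype_card]

variable [PartialOrder M] [StarOrderedRing M]

theorem exists_nonneg_sum_le_one_apply_eq_one (t : Finset (characterSpace ℂ M)) :
    ∃ a : characterSpace ℂ M → M,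
      (∀ φ, 0 ≤ a φ) ∧ ∑ φ ∈ t, a φ ≤ 1 ∧ ∀ φ : characterSpace ℂ M, φ (a φ) = 1 := by
  obtain ⟨f, hf0, hfsum, hf1⟩ := t.exists_continuous_nonneg_sum_le_one_apply_self_eq_one
  let g (φ : characterSpace ℂ M) : C(characterSpace ℂ M, ℂ) := ⟨fun ψ => (f φ ψ : ℂ), by fun_prop⟩
  have hg0 (φ) : 0 ≤ g φ := ContinuousMap.le_def.mpr fun ψ =>
    Complex.zero_le_real.mpr (ContinuousMap.le_def.mp (hf0 φ) ψ)
  have hgsum : ∑ φ ∈ t, g φ ≤ 1 := ContinuousMap.le_def.mpr fun ψ => by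
    have := ContinuousMap.le_def.mp hfsum ψ
    simp only [ContinuousMap.sum_apply, ContinuousMap.one_apply, g, ContinuousMap.coe_mk] at this ⊢
    exact_mod_cast this
  refine ⟨fun φ => (gelfandStarTransform M).symm (g φ), fun φ => map_nonneg _ (hg0 φ), ?_, ?_⟩
  · rw [← map_sum, ← map_one (gelfandStarTransform M).symm]
    exact OrderHomClass.mono _ hgsum
  · intro φ
    rw [← gelfandStarTransform_apply_apply, StarAlgEquiv.apply_symm_apply]
    simp [g, hf1]

variable {E : M → M}

theorem IsCondExp.card_le_of_forall_apply_eq (hE : IsCondExp E) {K : ℝ} (hK : 0 ≤ K)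
    (hpos : ∀ a : M, 0 ≤ a → 0 ≤ K • E a - a) (φ₀ : characterSpace ℂ M)
    (t : Finset (characterSpace ℂ M)) (ht : ∀ φ ∈ t, ∀ a, φ (E a) = φ₀ (E a)) :
    (#t : ℝ) ≤ K := by
  obtain ⟨a, ha, hsum, hone⟩ := exists_nonneg_sum_le_one_apply_eq_one t
  exact hE.card_le_of_sum_le_one hK hpos φ₀ t ht a ha hsum fun φ _ => hone φ

theorem IsCondExp.card_le_floor_mul_finrank (hE : IsCondExp E) {K : ℝ} (hK : 0 ≤ K)
    (hpos : ∀ a : M, 0 ≤ a → 0 ≤ K • E a - a) [FiniteDimensional ℂ hE.rangeSubalgebra]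
    (s : Finset (characterSpace ℂ M)) : #s ≤ ⌊K⌋₊ * finrank ℂ hE.rangeSubalgebra := by
  classical
  let restrict (φ : characterSpace ℂ M) : hE.rangeSubalgebra →ₐ[ℂ] ℂ :=
    (CharacterSpace.toAlgHom φ).comp hE.rangeSubalgebra.val
  have hfiber : ∀ ψ ∈ s.image restrict, #{φ ∈ s | restrict φ = ψ} ≤ ⌊K⌋₊ := by
    intro ψ hψ
    obtain ⟨φ₀, -, rfl⟩ := mem_image.mp hψ
    refine Nat.le_floor (hE.card_le_of_forall_apply_eq hK hpos φ₀ _ fun φ hφ a => ?_)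
    exact DFunLike.congr_fun (mem_filter.mp hφ).2 ⟨E a, hE.apply_mem_rangeSubalgebra a⟩
  have := Fintype.ofFinite (hE.rangeSubalgebra →ₐ[ℂ] ℂ)
  calc #s ≤ ⌊K⌋₊ * #(s.image restrict) := card_le_mul_card_image s _ hfiber
    _ ≤ ⌊K⌋₊ * Fintype.card (hE.rangeSubalgebra →ₐ[ℂ] ℂ) := by gcongr; exact card_le_univ _
    _ ≤ ⌊K⌋₊ * finrank ℂ hE.rangeSubalgebra := by
      rw [← Nat.card_eq_fintype_card]
      gcongr
      exact card_algHom_le_finrank _ _ _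

end Commutative

theorem condexp_findim_range_implies_findim_commutative_general
    {M : Type*} [CommCStarAlgebra M] [PartialOrder M] [StarOrderedRing M]
    (E : M → M) (hE : IsCondExp E)
    (hfin : FiniteDimensional ℂ ↥(Submodule.span ℂ (Set.range E)))
    (K : ℝ) (hK : 1 ≤ K)
    (hpos : ∀ a : M, 0 ≤ a → 0 ≤ K • E a - a) :
    FiniteDimensional ℂ M ∧
      (Module.finrank ℂ M : ℝ) ≤
        (⌊K⌋ : ℝ) * (Module.finrank ℂ ↥(Submodule.span ℂ (Set.range E)) : ℝ) := by
  have hK0 : 0 ≤ K := zero_le_one.trans hK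
  rw [← hE.toSubmodule_rangeSubalgebra] at hfin ⊢
  have : FiniteDimensional ℂ hE.rangeSubalgebra := Subalgebra.finiteDimensional_toSubmodule.mp hfin
  obtain ⟨_, hcard⟩ :=
    finite_and_natCard_le_of_forall_card_le (hE.card_le_floor_mul_finrank hK0 hpos)
  refine ⟨finiteDimensional_of_finite_characterSpace, ?_⟩
  rw [finrank_eq_natCard_characterSpace, Subalgebra.finrank_toSubmodule,
    ← natCast_floor_eq_intCast_floor hK0]
  exact_mod_cast hcard

theorem condexp_findim_range_implies_findim_commutative
    {M : Type*} [CommCStarAlgebra M] [PartialOrder M] [StarOrderedRing M]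
    (E : M → M) (hE : IsCondExp E)
    (hfaith : ∀ a : M, E (star a * a) = 0 → a = 0)
    (hfin : FiniteDimensional ℂ ↥(Submodule.span ℂ (Set.range E)))
    (K : ℝ) (hK : 1 ≤ K)
    (hpos : ∀ a : M, 0 ≤ a → 0 ≤ K • E a - a) :
    FiniteDimensional ℂ M ∧
      (Module.finrank ℂ M : ℝ) ≤
        (⌊K⌋ : ℝ) * (Module.finrank ℂ ↥(Submodule.span ℂ (Set.range E)) : ℝ) :=
  condexp_findim_range_implies_findim_commutative_general E hE hfin K hK hpos
end

section
/- Let 0 < ε < 1, let λ = 1/(2 + ε), and let E_λ be the conditional expectation on M₂(ℂ) defined by E_λ(a) = (λ·a₁₁ + (1 − λ)·a₂₂)·1₂. Set K(E_λ) = inf{K ≥ 1 : K·E_λ − id is positive} and L(E_λ) = inf{L ≥ 1 : L·E_λ − id is completely positive}. Then K(E_λ) = 2 + ε, L(E_λ) = 4 + ε²/(1 + ε), and L(E_λ) > ⌊K(E_λ)⌋², where ⌊·⌋ denotes the integer part. -/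
open scoped ComplexOrder

/-- The conditional expectation `E_λ` on the C*-algebra of 2×2 complex matrices,
`E_λ(a) = (λ·a₁₁ + (1 − λ)·a₂₂)·1₂`. -/
noncomputable def Elam (l : ℝ) (a : Matrix (Fin 2) (Fin 2) ℂ) : Matrix (Fin 2) (Fin 2) ℂ :=
  ((l : ℂ) * a 0 0 + (1 - (l : ℂ)) * a 1 1) • (1 : Matrix (Fin 2) (Fin 2) ℂ)

/-- A map `Φ` on a (C*-)algebra `R` is completely positive if for every `n ≥ 1` its entrywise
application to `n × n` matrices over `R` maps positive elements (i.e. elements of the form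
`star B * B`, which are exactly the positive elements of the C*-algebra of matrices over a
C*-algebra) to positive elements. -/
def IsCompletelyPositive {R : Type*} [Ring R] [StarRing R] (Φ : R → R) : Prop :=
  ∀ (n : ℕ) (M : Matrix (Fin n) (Fin n) R),
    (∃ B : Matrix (Fin n) (Fin n) R, M = star B * B) →
    ∃ C : Matrix (Fin n) (Fin n) R, M.map Φ = star C * C

/-!
Write `λ` for the parameter and index entries from 1. For positive `a` and `λ ≤ 1/2`,
`(1/λ)·E_λ(a) - a = (tr a · 1 - a) + ((1 - 2λ)/λ)·a₂₂·1`, and for a 2×2 matrix the adjugate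
`tr a · 1 - a` is a unitary conjugate of `aᵀ`, hence positive; testing on `a = e₁₁` shows that
`1/λ` is optimal. For the complete index, `(1/(λ(1-λ)))·E_λ - id` has the Kraus form
`a ↦ (1/(λ(1-λ)))·V*aV + (1/(1-λ))·e₁₂* a e₁₂ + (1/λ)·e₂₁* a e₂₁` with `V = diag(λ, λ - 1)`,
hence is completely positive; conversely, the Choi matrix of `L·E_λ - id` evaluated on the vector
`(1-λ)·e₁⊗e₁ + λ·e₂⊗e₂` gives `L·λ(1-λ) - 1 ≥ 0`. At `λ = 1/(2+ε)` the two constants are `2+ε`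
and `(2+ε)²/(1+ε) = 4 + ε²/(1+ε) > 4 = ⌊2+ε⌋²`.
-/

open Matrix

section CompletePositivity

variable {n m : Type*} [Fintype n] [Fintype m]

theorem Matrix.comp_mul {R : Type*} [Semiring R] (A B : Matrix n n (Matrix m m R)) :
    comp n n m m R (A * B) = comp n n m m R A * comp n n m m R B :=
  map_mul (compRingEquiv n m R) A B

theorem Matrix.exists_eq_star_mul_self_iff_posSemidef_comp [DecidableEq n] [DecidableEq m]
    (M : Matrix n n (Matrix m m ℂ)) :
    (∃ C, M = star C * C) ↔ (comp n n m m ℂ M).PosSemidef := by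
  constructor
  · rintro ⟨C, rfl⟩
    rw [comp_mul, star_eq_conjTranspose, ← conjTranspose_comp']
    exact posSemidef_conjTranspose_mul_self _
  · intro h
    open scoped Matrix.Norms.L2Operator MatrixOrder in
    obtain ⟨S, hS⟩ := CStarAlgebra.nonneg_iff_eq_star_mul_self.mp h.nonneg
    refine ⟨(comp n n m m ℂ).symm S, (comp n n m m ℂ).injective ?_⟩
    rw [comp_mul, star_eq_conjTranspose, ← conjTranspose_comp', Equiv.apply_symm_apply, hS,
      star_eq_conjTranspose]

theorem Matrix.map_conjTranspose_mul_mul [DecidableEq n] {R : Type*} [Semiring R] [StarRing R]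
    (M : Matrix n n (Matrix m m R)) (V : Matrix m m R) :
    M.map (fun a => Vᴴ * a * V) = star (diagonal fun _ => V) * M * diagonal fun _ => V := by
  ext i j : 1
  simp [star_eq_conjTranspose, diagonal_conjTranspose, mul_diagonal, diagonal_mul]

theorem isCompletelyPositive_of_eq_sum_smul_conjTranspose_mul_mul [DecidableEq m]
    {ι : Type*} [Fintype ι] {c : ι → ℝ} (hc : 0 ≤ c) (V : ι → Matrix m m ℂ)
    {Φ : Matrix m m ℂ → Matrix m m ℂ} (hΦ : ∀ a, Φ a = ∑ k, c k • ((V k)ᴴ * a * V k)) :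
    IsCompletelyPositive Φ := by
  intro N M hM
  rw [exists_eq_star_mul_self_iff_posSemidef_comp] at hM ⊢
  have hsum : M.map Φ = ∑ k, c k • M.map (fun a => (V k)ᴴ * a * V k) := by
    ext i j : 2
    simp [hΦ, Matrix.sum_apply]
  rw [hsum, ← compLinearEquiv_apply _ _ _ _ _ ℝ, map_sum]
  refine posSemidef_sum _ fun k _ => ?_
  rw [map_smul, compLinearEquiv_apply, map_conjTranspose_mul_mul, comp_mul, comp_mul,
    star_eq_conjTranspose, ← conjTranspose_comp']
  exact (hM.conjTranspose_mul_mul_same _).smul (hc k)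

end CompletePositivity

def Matrix.choiMatrix (n R : Type*) [DecidableEq n] [Zero R] [One R] :
    Matrix n n (Matrix n n R) :=
  of fun i j => single i j 1

theorem Matrix.comp_choiMatrix {n : Type*} [DecidableEq n] :
    comp n n n n ℂ (choiMatrix n ℂ) =
      vecMulVec (fun p => if p.1 = p.2 then 1 else 0) (star fun p => if p.1 = p.2 then 1 else 0) := by
  ext ⟨i, k⟩ ⟨j, l⟩
  simp [choiMatrix, vecMulVec, single_apply, ← ite_and, and_comm]

theorem Matrix.trace_smul_one_sub_eq {R : Type*} [CommRing R] [StarRing R]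
    (a : Matrix (Fin 2) (Fin 2) R) :
    a.trace • (1 : Matrix (Fin 2) (Fin 2) R) - a = !![0, 1; -1, 0] * aᵀ * (!![0, 1; -1, 0])ᴴ := by
  ext i j
  fin_cases i <;> fin_cases j <;>
    simp [trace_fin_two, mul_apply, vecMul, dotProduct, Fin.sum_univ_two]

theorem Matrix.PosSemidef.trace_smul_one_sub {𝕜 : Type*} [RCLike 𝕜]
    {a : Matrix (Fin 2) (Fin 2) 𝕜} (ha : a.PosSemidef) :
    (a.trace • (1 : Matrix (Fin 2) (Fin 2) 𝕜) - a).PosSemidef := by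
  rw [trace_smul_one_sub_eq]
  exact ha.transpose.mul_mul_conjTranspose_same _

section Elam

variable {l : ℝ}

theorem one_div_smul_Elam_sub_eq (hl : l ≠ 0) (a : Matrix (Fin 2) (Fin 2) ℂ) :
    (1 / l) • Elam l a - a = (a.trace • 1 - a) + ((1 - 2 * l) / l) • (a 1 1 • 1) := by
  ext i j
  fin_cases i <;> fin_cases j <;> simp [Elam, trace_fin_two] <;> field_simp <;> ring

theorem posSemidef_one_div_smul_Elam_sub (hl0 : 0 < l) (hl : l ≤ 1 / 2)
    {a : Matrix (Fin 2) (Fin 2) ℂ} (ha : a.PosSemidef) : ((1 / l) • Elam l a - a).PosSemidef := by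
  rw [one_div_smul_Elam_sub_eq hl0.ne']
  refine ha.trace_smul_one_sub.add ((PosSemidef.one.smul ha.diag_nonneg).smul ?_)
  exact div_nonneg (by linarith) hl0.le

theorem one_div_le_of_posSemidef_smul_Elam_sub_single (hl : 0 < l) {K : ℝ}
    (h : (K • Elam l (single 0 0 1) - single 0 0 1).PosSemidef) : 1 / l ≤ K := by
  have h00 : (0 : ℂ) ≤ ((K * l - 1 : ℝ) : ℂ) := by
    simpa [Elam] using h.diag_nonneg (i := 0)
  rw [Complex.zero_le_real] at h00
  rw [div_le_iff₀ hl]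
  linarith

theorem isLeast_positiveIndex_Elam (hl0 : 0 < l) (hl : l ≤ 1 / 2) :
    IsLeast {K : ℝ | 1 ≤ K ∧ ∀ a : Matrix (Fin 2) (Fin 2) ℂ,
      a.PosSemidef → (K • Elam l a - a).PosSemidef} (1 / l) := by
  refine ⟨⟨?_, fun _ => posSemidef_one_div_smul_Elam_sub hl0 hl⟩, fun K hK => ?_⟩
  · rw [le_div_iff₀ hl0]
    linarith
  · refine one_div_le_of_posSemidef_smul_Elam_sub_single hl0 (hK.2 _ ?_)
    rw [← diagonal_single]
    exact PosSemidef.diagonal (Pi.single_nonneg.mpr zero_le_one)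

theorem smul_Elam_sub_eq_sum (hl0 : l ≠ 0) (hl1 : l ≠ 1) (a : Matrix (Fin 2) (Fin 2) ℂ) :
    (1 / (l * (1 - l))) • Elam l a - a =
      ∑ k, ![1 / (l * (1 - l)), 1 / (1 - l), 1 / l] k •
        ((![diagonal ![(l : ℂ), l - 1], single 0 1 1, single 1 0 1] k)ᴴ * a *
          ![diagonal ![(l : ℂ), l - 1], single 0 1 1, single 1 0 1] k) := by
  have hl0' : (l : ℂ) ≠ 0 := by exact_mod_cast hl0
  have hl1' : 1 - (l : ℂ) ≠ 0 := by exact_mod_cast sub_ne_zero.mpr (Ne.symm hl1)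
  ext i j
  fin_cases i <;> fin_cases j <;>
    simp [Elam, Fin.sum_univ_three, mul_apply, Fin.sum_univ_two] <;>
    field_simp <;> ring

theorem isCompletelyPositive_smul_Elam_sub (hl0 : 0 < l) (hl1 : l < 1) :
    IsCompletelyPositive fun a => (1 / (l * (1 - l))) • Elam l a - a := by
  refine isCompletelyPositive_of_eq_sum_smul_conjTranspose_mul_mul ?_ _
    (smul_Elam_sub_eq_sum hl0.ne' hl1.ne)
  have hl1' : 0 < 1 - l := by linarith
  intro k
  fin_cases k
  · exact (one_div_pos.mpr (mul_pos hl0 hl1')).le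
  · exact (one_div_pos.mpr hl1').le
  · exact (one_div_pos.mpr hl0).le

theorem one_div_le_of_isCompletelyPositive_smul_Elam_sub (hl0 : 0 < l) (hl1 : l < 1) {L : ℝ}
    (h : IsCompletelyPositive fun a => L • Elam l a - a) : 1 / (l * (1 - l)) ≤ L := by
  have hchoi : (comp _ _ _ _ ℂ ((choiMatrix (Fin 2) ℂ).map fun a => L • Elam l a - a)).PosSemidef := by
    rw [← exists_eq_star_mul_self_iff_posSemidef_comp]
    refine h 2 _ ((exists_eq_star_mul_self_iff_posSemidef_comp _).mpr ?_)
    rw [comp_choiMatrix]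
    exact posSemidef_vecMulVec_self_star _
  have hq := hchoi.dotProduct_mulVec_nonneg fun p =>
    if p.1 = p.2 then ((![1 - l, l] p.1 : ℝ) : ℂ) else 0
  have hLl : (0 : ℂ) ≤ ((L * (l * (1 - l)) - 1 : ℝ) : ℂ) := by
    convert hq using 1
    simp [dotProduct, mulVec, Fintype.sum_prod_type, Fin.sum_univ_two, choiMatrix, Elam]
    ring
  rw [Complex.zero_le_real] at hLl
  rw [div_le_iff₀ (by nlinarith)]
  linarith

theorem isLeast_completelyPositiveIndex_Elam (hl0 : 0 < l) (hl1 : l < 1) :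
    IsLeast {L : ℝ | 1 ≤ L ∧ IsCompletelyPositive fun a : Matrix (Fin 2) (Fin 2) ℂ =>
      L • Elam l a - a} (1 / (l * (1 - l))) := by
  refine ⟨⟨?_, isCompletelyPositive_smul_Elam_sub hl0 hl1⟩,
    fun _ hL => one_div_le_of_isCompletelyPositive_smul_Elam_sub hl0 hl1 hL.2⟩
  rw [le_div_iff₀ (by nlinarith)]
  nlinarith [sq_nonneg (2 * l - 1)]

end Elam

theorem Elam_index_constants (ε : ℝ) (hε0 : 0 < ε) (hε1 : ε < 1) :
    sInf {K : ℝ | 1 ≤ K ∧ ∀ a : Matrix (Fin 2) (Fin 2) ℂ,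
        a.PosSemidef → (K • Elam (1 / (2 + ε)) a - a).PosSemidef} = 2 + ε ∧
    sInf {L : ℝ | 1 ≤ L ∧
        IsCompletelyPositive (fun a : Matrix (Fin 2) (Fin 2) ℂ =>
          L • Elam (1 / (2 + ε)) a - a)} = 4 + ε ^ 2 / (1 + ε) ∧
    ((⌊sInf {K : ℝ | 1 ≤ K ∧ ∀ a : Matrix (Fin 2) (Fin 2) ℂ,
        a.PosSemidef → (K • Elam (1 / (2 + ε)) a - a).PosSemidef}⌋ : ℝ)) ^ 2 <
      sInf {L : ℝ | 1 ≤ L ∧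
        IsCompletelyPositive (fun a : Matrix (Fin 2) (Fin 2) ℂ =>
          L • Elam (1 / (2 + ε)) a - a)} := by
  have hl0 : 0 < 1 / (2 + ε) := by positivity
  have hl : 1 / (2 + ε) ≤ 1 / 2 := one_div_le_one_div_of_le two_pos (by linarith)
  have hK : 1 / (1 / (2 + ε)) = 2 + ε := one_div_one_div _
  have hL : 1 / (1 / (2 + ε) * (1 - 1 / (2 + ε))) = 4 + ε ^ 2 / (1 + ε) := by
    have : 1 / (2 + ε) * (1 - 1 / (2 + ε)) = (1 + ε) / (2 + ε) ^ 2 := by field_simp; ring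
    rw [this, one_div_div]
    field_simp
    ring
  have hfloor : ⌊2 + ε⌋ = 2 := by
    rw [Int.floor_eq_iff]
    constructor <;> push_cast <;> linarith
  rw [(isLeast_positiveIndex_Elam hl0 hl).csInf_eq,
    (isLeast_completelyPositiveIndex_Elam hl0 (by linarith)).csInf_eq, hK, hL, hfloor]
  refine ⟨rfl, rfl, ?_⟩
  have : 0 < ε ^ 2 / (1 + ε) := by positivity
  push_cast
  linarith
end
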